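/- Let g₁, g₂ : Ω → 𝔻 be nowhere-holomorphic C² functions on an open set Ω ⊆ ℂ satisfying the compatibility condition (CP) and the integrability condition (Ge1), and set f := −2i·conj(F). Then on Ω: (f·g₁)_z̄ = −(i/2)|f|²·(1 − 2 g₁·conj(g₂) + |g₁|²|g₂|²), (f·g₂)_z̄ = −(i/2)|f|²·(1 − 2 conj(g₁)·g₂ + |g₁|²|g₂|²), and (f·g₁·g₂)_z̄ = −(i/2)|f|²·[g₁(1 − |g₂|²) + g₂(1 − |g₁|²)]. -/

import Mathlib

open Complex ComplexConjugate

/-- Wirtinger derivative `∂h/∂z = ½(∂h/∂u − i ∂h/∂v)` of a map `h : ℂ → ℂ`. -/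
noncomputable def wz (h : ℂ → ℂ) (z : ℂ) : ℂ :=
  (1 / 2) * (fderiv ℝ h z 1 - Complex.I * fderiv ℝ h z Complex.I)

/-- Wirtinger derivative `∂h/∂z̄ = ½(∂h/∂u + i ∂h/∂v)` of a map `h : ℂ → ℂ`. -/
noncomputable def wzb (h : ℂ → ℂ) (z : ℂ) : ℂ :=
  (1 / 2) * (fderiv ℝ h z 1 + Complex.I * fderiv ℝ h z Complex.I)

/-- Wirtinger derivative `∂x/∂z` of a real-valued map `x : ℂ → ℝ`. -/
noncomputable def wzR (x : ℂ → ℝ) (z : ℂ) : ℂ :=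
  (1 / 2) * (((fderiv ℝ x z 1 : ℝ) : ℂ) - Complex.I * ((fderiv ℝ x z Complex.I : ℝ) : ℂ))

/-- The function `F` appearing in the compatibility condition (CP). -/
noncomputable def Ffun (g₁ g₂ : ℂ → ℂ) (z : ℂ) : ℂ :=
  wzb g₁ z / ((1 - g₁ z * conj (g₂ z)) * (1 + (Complex.normSq (g₁ z) : ℂ)))

/-- The compatibility condition (CP) at a point `z`. -/
def CP (g₁ g₂ : ℂ → ℂ) (z : ℂ) : Prop :=
  Ffun g₁ g₂ z = wzb g₂ z / ((1 - conj (g₁ z) * g₂ z) * (1 + (Complex.normSq (g₂ z) : ℂ)))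

/-- The integrability condition (Ge1) at a point `z`. -/
def Ge1 (g₁ g₂ : ℂ → ℂ) (z : ℂ) : Prop :=
  0 = wz (wzb g₁) z
      + (conj (g₂ z) / (1 - g₁ z * conj (g₂ z))
          - conj (g₁ z) / (1 + (Complex.normSq (g₁ z) : ℂ))) * wz g₁ z * wzb g₁ z
      + ((g₁ z + g₂ z) / ((1 - conj (g₁ z) * g₂ z) * (1 + (Complex.normSq (g₁ z) : ℂ))))
          * (Complex.normSq (wzb g₁ z) : ℂ)

/-- The integrability condition (Ge2) at a point `z`. -/
def Ge2 (g₁ g₂ : ℂ → ℂ) (z : ℂ) : Prop :=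
  0 = wz (wzb g₂) z
      + (conj (g₁ z) / (1 - conj (g₁ z) * g₂ z)
          - conj (g₂ z) / (1 + (Complex.normSq (g₂ z) : ℂ))) * wz g₂ z * wzb g₂ z
      + ((g₁ z + g₂ z) / ((1 - g₁ z * conj (g₂ z)) * (1 + (Complex.normSq (g₂ z) : ℂ))))
          * (Complex.normSq (wzb g₂ z) : ℂ)

/-- The function `f := −2i·conj(F)`. -/
noncomputable def ffun (g₁ g₂ : ℂ → ℂ) (z : ℂ) : ℂ :=
  -2 * Complex.I * conj (Ffun g₁ g₂ z)


/-! Since `f = −2i·conj F`, we have `f_z̄ = −2i·conj(F_z)`, so everything reduces to computing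
`F_z`. Writing `F = (g₁)_z̄ / D` with `D = (1 − g₁ḡ₂)(1 + |g₁|²)`, the quotient rule expresses `F_z`
through `(g₁)_{zz̄}`, `(g₁)_z`, `(g₁)_z̄` and `conj((g₂)_z̄)`. Eliminating `(g₁)_{zz̄}` by (Ge1) and
writing `(g₁)_z̄`, `(g₂)_z̄` as `F` times explicit factors (the definition of `F` and (CP)), the
`(g₁)_z` terms cancel and `F_z = |F|²(g₁g₂(ḡ₁ + ḡ₂) − (g₁ + g₂))`. The three identities then
follow from the Leibniz rule for `∂/∂z̄` and `|f|² = 4|F|²` by polynomial arithmetic. -/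

-- Also where `h` is not differentiable: then both sides vanish.
theorem fderiv_apply_eq_wz_mul_add_wzb_mul (h : ℂ → ℂ) (z v : ℂ) :
    fderiv ℝ h z v = wz h z * v + wzb h z * conj v := by
  have hv : v = v.re • (1 : ℂ) + v.im • I := by simp [re_add_im]
  conv_lhs => rw [hv, map_add, map_smul, map_smul]
  conv_rhs => rw [← re_add_im v]
  simp only [wz, wzb, real_smul, map_add, map_mul, conj_ofReal, conj_I]
  linear_combination (↑v.im * fderiv ℝ h z I) * I_sq

structure HasWirtingerAt (h : ℂ → ℂ) (a b z : ℂ) : Prop where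
  differentiableAt : DifferentiableAt ℝ h z
  wz_eq : wz h z = a
  wzb_eq : wzb h z = b

theorem DifferentiableAt.hasWirtingerAt {h : ℂ → ℂ} {z : ℂ} (hh : DifferentiableAt ℝ h z) :
    HasWirtingerAt h (wz h z) (wzb h z) z :=
  ⟨hh, rfl, rfl⟩

namespace HasWirtingerAt

variable {h k : ℂ → ℂ} {a b c d z : ℂ}

theorem fderiv_apply (hh : HasWirtingerAt h a b z) (v : ℂ) :
    fderiv ℝ h z v = a * v + b * conj v := by
  rw [← hh.wz_eq, ← hh.wzb_eq, fderiv_apply_eq_wz_mul_add_wzb_mul]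

theorem of_fderiv_apply (hh : DifferentiableAt ℝ h z)
    (hL : ∀ v, fderiv ℝ h z v = a * v + b * conj v) : HasWirtingerAt h a b z where
  differentiableAt := hh
  wz_eq := by
    simp only [wz, hL, map_one, conj_I]
    linear_combination (-(1 / 2) * (a - b)) * I_sq
  wzb_eq := by
    simp only [wzb, hL, map_one, conj_I]
    linear_combination (1 / 2 * (a - b)) * I_sq

theorem const (c z : ℂ) : HasWirtingerAt (fun _ => c) 0 0 z :=
  of_fderiv_apply (differentiableAt_const c) fun v => by simp

theorem add (hh : HasWirtingerAt h a b z) (hk : HasWirtingerAt k c d z) :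
    HasWirtingerAt (fun w => h w + k w) (a + c) (b + d) z :=
  of_fderiv_apply (hh.differentiableAt.add hk.differentiableAt) fun v => by
    rw [fderiv_fun_add hh.differentiableAt hk.differentiableAt, add_apply,
      hh.fderiv_apply, hk.fderiv_apply]
    ring

theorem sub (hh : HasWirtingerAt h a b z) (hk : HasWirtingerAt k c d z) :
    HasWirtingerAt (fun w => h w - k w) (a - c) (b - d) z :=
  of_fderiv_apply (hh.differentiableAt.sub hk.differentiableAt) fun v => by
    rw [fderiv_fun_sub hh.differentiableAt hk.differentiableAt, sub_apply,
      hh.fderiv_apply, hk.fderiv_apply]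
    ring

theorem mul (hh : HasWirtingerAt h a b z) (hk : HasWirtingerAt k c d z) :
    HasWirtingerAt (fun w => h w * k w) (a * k z + h z * c) (b * k z + h z * d) z :=
  of_fderiv_apply (hh.differentiableAt.mul hk.differentiableAt) fun v => by
    rw [fderiv_fun_mul hh.differentiableAt hk.differentiableAt, add_apply,
      smul_apply, smul_apply, smul_eq_mul, smul_eq_mul,
      hh.fderiv_apply, hk.fderiv_apply]
    ring

theorem star (hh : HasWirtingerAt h a b z) :
    HasWirtingerAt (fun w => conj (h w)) (conj b) (conj a) z := by
  have hd := conjCLE.differentiableAt.comp z hh.differentiableAt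
  refine of_fderiv_apply hd fun v => ?_
  rw [show (fun w => (starRingEnd ℂ) (h w)) = conjCLE ∘ h from rfl,
    fderiv_comp z conjCLE.differentiableAt hh.differentiableAt, conjCLE.fderiv]
  simp only [ContinuousLinearMap.coe_comp, Function.comp_apply, ContinuousLinearEquiv.coe_coe,
    conjCLE_apply, hh.fderiv_apply, map_add, map_mul, conj_conj]
  ring

theorem inv (hh : HasWirtingerAt h a b z) (hz : h z ≠ 0) :
    HasWirtingerAt (fun w => (h w)⁻¹) (-a / h z ^ 2) (-b / h z ^ 2) z :=
  of_fderiv_apply (hh.differentiableAt.inv hz) fun v => by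
    rw [show (fun w => (h w)⁻¹) = Inv.inv ∘ h from rfl,
      fderiv_comp z (differentiableAt_inv hz) hh.differentiableAt, fderiv_inv' hz]
    simp only [ContinuousLinearMap.coe_comp, Function.comp_apply,
      neg_apply, ContinuousLinearMap.mulLeftRight_apply, hh.fderiv_apply]
    field_simp
    ring

theorem const_mul (c : ℂ) (hh : HasWirtingerAt h a b z) :
    HasWirtingerAt (fun w => c * h w) (c * a) (c * b) z := by
  simpa using (const c z).mul hh

end HasWirtingerAt

theorem ContDiffAt.differentiableAt_wzb {g : ℂ → ℂ} {z : ℂ} (hg : ContDiffAt ℝ 2 g z) :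
    DifferentiableAt ℝ (wzb g) z := by
  have hg' : ContDiffAt ℝ 1 (fderiv ℝ g) z := hg.fderiv_right (by norm_num)
  have happ (v : ℂ) : DifferentiableAt ℝ (fun w => fderiv ℝ g w v) z :=
    (hg'.clm_apply contDiffAt_const).differentiableAt one_ne_zero
  exact (differentiableAt_const _).mul ((happ 1).add ((differentiableAt_const _).mul (happ I)))

theorem one_sub_mul_conj_ne_zero {a b : ℂ} (ha : ‖a‖ < 1) (hb : ‖b‖ < 1) : 1 - a * conj b ≠ 0 := by
  refine sub_ne_zero.mpr fun h => ?_
  have : ‖a * conj b‖ < 1 := by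
    rw [norm_mul, norm_conj]
    exact mul_lt_one_of_nonneg_of_lt_one_left (norm_nonneg a) ha hb.le
  simp [← h] at this

theorem one_add_mul_conj_ne_zero (a : ℂ) : 1 + a * conj a ≠ 0 := by
  rw [mul_conj, ← ofReal_one, ← ofReal_add, ofReal_ne_zero]
  exact (add_pos_of_pos_of_nonneg one_pos (normSq_nonneg a)).ne'

theorem Ffun_eq_mul_inv (g₁ g₂ : ℂ → ℂ) :
    Ffun g₁ g₂ = fun w => wzb g₁ w * ((1 - g₁ w * conj (g₂ w)) * (1 + g₁ w * conj (g₁ w)))⁻¹ := by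
  ext w
  rw [Ffun, div_eq_mul_inv, mul_conj]

theorem wzb_eq_Ffun_mul {g₁ g₂ : ℂ → ℂ} {z : ℂ} (h₁₂ : 1 - g₁ z * conj (g₂ z) ≠ 0) :
    wzb g₁ z = Ffun g₁ g₂ z * ((1 - g₁ z * conj (g₂ z)) * (1 + g₁ z * conj (g₁ z))) := by
  rw [Ffun, ← mul_conj, div_mul_cancel₀ _ (mul_ne_zero h₁₂ (one_add_mul_conj_ne_zero _))]

theorem CP.wzb_eq_Ffun_mul {g₁ g₂ : ℂ → ℂ} {z : ℂ} (hCP : CP g₁ g₂ z)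
    (h₂₁ : 1 - conj (g₁ z) * g₂ z ≠ 0) :
    wzb g₂ z = Ffun g₁ g₂ z * ((1 - conj (g₁ z) * g₂ z) * (1 + g₂ z * conj (g₂ z))) := by
  rw [hCP, ← mul_conj, div_mul_cancel₀ _ (mul_ne_zero h₂₁ (one_add_mul_conj_ne_zero _))]

theorem normSq_ffun (g₁ g₂ : ℂ → ℂ) (z : ℂ) :
    normSq (ffun g₁ g₂ z) = 4 * normSq (Ffun g₁ g₂ z) := by
  simp only [ffun, normSq_mul, normSq_conj, normSq_neg, normSq_I]
  norm_num

theorem hasWirtingerAt_Ffun {g₁ g₂ : ℂ → ℂ} {z : ℂ} (hq : DifferentiableAt ℝ (wzb g₁) z)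
    (hg₁ : DifferentiableAt ℝ g₁ z) (hg₂ : DifferentiableAt ℝ g₂ z)
    (h₁₂ : 1 - g₁ z * conj (g₂ z) ≠ 0) (hCP : CP g₁ g₂ z) (hGe1 : Ge1 g₁ g₂ z) :
    HasWirtingerAt (Ffun g₁ g₂)
      (normSq (Ffun g₁ g₂ z) * (g₁ z * g₂ z * (conj (g₁ z) + conj (g₂ z)) - (g₁ z + g₂ z)))
      (wzb (Ffun g₁ g₂) z) z := by
  have h₂₁ : 1 - conj (g₁ z) * g₂ z ≠ 0 := by
    simpa [mul_comm] using (map_ne_zero (starRingEnd ℂ)).mpr h₁₂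
  have hD := ((HasWirtingerAt.const 1 z).sub (hg₁.hasWirtingerAt.mul hg₂.hasWirtingerAt.star)).mul
    ((HasWirtingerAt.const 1 z).add (hg₁.hasWirtingerAt.mul hg₁.hasWirtingerAt.star))
  have hF := hq.hasWirtingerAt.mul (hD.inv (mul_ne_zero h₁₂ (one_add_mul_conj_ne_zero _)))
  rw [← Ffun_eq_mul_inv] at hF
  refine ⟨hF.differentiableAt, ?_, rfl⟩
  rw [Ge1, ← mul_conj, ← mul_conj] at hGe1
  rw [hF.wz_eq, eq_sub_of_add_eq (eq_neg_of_add_eq_zero_left hGe1.symm),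
    hCP.wzb_eq_Ffun_mul h₂₁, ← mul_conj, Ffun]
  simp only [← mul_conj, map_mul, map_div₀, map_sub, map_add, map_one, conj_conj]
  have h₁₁ := one_add_mul_conj_ne_zero (g₁ z)
  -- the form in which `field_simp` meets this denominator
  rw [mul_comm] at h₂₁
  field_simp
  ring

theorem fg_zbar_identities_general
    (Ω : Set ℂ) (hΩ : IsOpen Ω) (g₁ g₂ : ℂ → ℂ)
    (hg₁ : ContDiffOn ℝ 2 g₁ Ω) (hg₂ : ContDiffOn ℝ 2 g₂ Ω)
    (hd₁ : ∀ z ∈ Ω, ‖g₁ z‖ < 1) (hd₂ : ∀ z ∈ Ω, ‖g₂ z‖ < 1)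
    (hCP : ∀ z ∈ Ω, CP g₁ g₂ z)
    (hGe1 : ∀ z ∈ Ω, Ge1 g₁ g₂ z) :
    ∀ z ∈ Ω,
      (wzb (fun w => ffun g₁ g₂ w * g₁ w) z
        = -(Complex.I / 2) * (Complex.normSq (ffun g₁ g₂ z) : ℂ)
            * (1 - 2 * g₁ z * conj (g₂ z)
              + (Complex.normSq (g₁ z) : ℂ) * (Complex.normSq (g₂ z) : ℂ)))
      ∧ (wzb (fun w => ffun g₁ g₂ w * g₂ w) z
        = -(Complex.I / 2) * (Complex.normSq (ffun g₁ g₂ z) : ℂ)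
            * (1 - 2 * conj (g₁ z) * g₂ z
              + (Complex.normSq (g₁ z) : ℂ) * (Complex.normSq (g₂ z) : ℂ)))
      ∧ (wzb (fun w => ffun g₁ g₂ w * g₁ w * g₂ w) z
        = -(Complex.I / 2) * (Complex.normSq (ffun g₁ g₂ z) : ℂ)
            * (g₁ z * (1 - (Complex.normSq (g₂ z) : ℂ))
              + g₂ z * (1 - (Complex.normSq (g₁ z) : ℂ)))) := by
  intro z hz
  have hg₁z : ContDiffAt ℝ 2 g₁ z := hg₁.contDiffAt (hΩ.mem_nhds hz)
  have hW₁ := (hg₁z.differentiableAt two_ne_zero).hasWirtingerAt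
  have hW₂ := ((hg₂.contDiffAt (hΩ.mem_nhds hz)).differentiableAt two_ne_zero).hasWirtingerAt
  have h₁₂ := one_sub_mul_conj_ne_zero (hd₁ z hz) (hd₂ z hz)
  have h₂₁ : 1 - conj (g₁ z) * g₂ z ≠ 0 := by
    simpa [mul_comm] using one_sub_mul_conj_ne_zero (hd₂ z hz) (hd₁ z hz)
  have hf : HasWirtingerAt (ffun g₁ g₂) _ _ z :=
    ((hasWirtingerAt_Ffun hg₁z.differentiableAt_wzb hW₁.differentiableAt hW₂.differentiableAt h₁₂
      (hCP z hz) (hGe1 z hz)).star).const_mul (-2 * I)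
  refine ⟨(hf.mul hW₁).wzb_eq.trans ?_, (hf.mul hW₂).wzb_eq.trans ?_,
    ((hf.mul hW₁).mul hW₂).wzb_eq.trans ?_⟩ <;>
  · rw [normSq_ffun]
    simp only [ffun, wzb_eq_Ffun_mul h₁₂, (hCP z hz).wzb_eq_Ffun_mul h₂₁, ofReal_mul, ofReal_ofNat,
      ← mul_conj, map_mul, map_sub, map_add, conj_conj]
    ring

/-- **(Step B, identities (Tq2a), (Tq2b), (Tq3)).** Under (CP) and (Ge1):
`(f·g₁)_z̄ = −(i/2)|f|²(1 − 2g₁·conj(g₂) + |g₁|²|g₂|²)`,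
`(f·g₂)_z̄ = −(i/2)|f|²(1 − 2conj(g₁)·g₂ + |g₁|²|g₂|²)`, and
`(f·g₁·g₂)_z̄ = −(i/2)|f|²[g₁(1 − |g₂|²) + g₂(1 − |g₁|²)]`. -/
theorem fg_zbar_identities
    (Ω : Set ℂ) (hΩ : IsOpen Ω) (g₁ g₂ : ℂ → ℂ)
    (hg₁ : ContDiffOn ℝ 2 g₁ Ω) (hg₂ : ContDiffOn ℝ 2 g₂ Ω)
    (hd₁ : ∀ z ∈ Ω, ‖g₁ z‖ < 1) (hd₂ : ∀ z ∈ Ω, ‖g₂ z‖ < 1)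
    (hnh₁ : ∀ z ∈ Ω, wzb g₁ z ≠ 0) (hnh₂ : ∀ z ∈ Ω, wzb g₂ z ≠ 0)
    (hCP : ∀ z ∈ Ω, CP g₁ g₂ z)
    (hGe1 : ∀ z ∈ Ω, Ge1 g₁ g₂ z) :
    ∀ z ∈ Ω,
      (wzb (fun w => ffun g₁ g₂ w * g₁ w) z
        = -(Complex.I / 2) * (Complex.normSq (ffun g₁ g₂ z) : ℂ)
            * (1 - 2 * g₁ z * conj (g₂ z)
              + (Complex.normSq (g₁ z) : ℂ) * (Complex.normSq (g₂ z) : ℂ)))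
      ∧ (wzb (fun w => ffun g₁ g₂ w * g₂ w) z
        = -(Complex.I / 2) * (Complex.normSq (ffun g₁ g₂ z) : ℂ)
            * (1 - 2 * conj (g₁ z) * g₂ z
              + (Complex.normSq (g₁ z) : ℂ) * (Complex.normSq (g₂ z) : ℂ)))
      ∧ (wzb (fun w => ffun g₁ g₂ w * g₁ w * g₂ w) z
        = -(Complex.I / 2) * (Complex.normSq (ffun g₁ g₂ z) : ℂ)
            * (g₁ z * (1 - (Complex.normSq (g₂ z) : ℂ))
              + g₂ z * (1 - (Complex.normSq (g₁ z) : ℂ)))) :=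
  fg_zbar_identities_general Ω hΩ g₁ g₂ hg₁ hg₂ hd₁ hd₂ hCP hGe1
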